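/- Let W be a Waldhausen category with cylinders satisfying the 2 out of 3 axiom. If f, g: A → A' are weak equivalences that are homotopic (i.e., there exists a weak equivalence h: A' → A'' and a morphism H: IA → A'' from a cylinder of A with H∘i₀ = h∘f and H∘i₁ = h∘g), then [f: A → A'] = [g: A → A'] in the degree-1 group D₁W of the associated stable quadratic module. -/

import Mathlib

/-- A stable quadratic module: group homomorphisms
`⟨·,·⟩ : C₀^{ab} ⊗ C₀^{ab} → C₁` (encoded as a biadditive map on `C₀`
vanishing on commutators in each variable) and `∂ : C₁ → C₀` such that
(1) `∂⟨c₀,d₀⟩ = [d₀,c₀]`, (2) `⟨∂c₁,∂d₁⟩ = [d₁,c₁]`,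
(3) `⟨c₀,d₀⟩ + ⟨d₀,c₀⟩ = 0`, where `[x,y] = -x-y+x+y`.
Groups are written additively but are not assumed commutative. -/
structure SQM (C₀ C₁ : Type*) [AddGroup C₀] [AddGroup C₁] where
  del : C₁ →+ C₀
  brk : C₀ → C₀ → C₁
  brk_add_left : ∀ x y z : C₀, brk (x + y) z = brk x z + brk y z
  brk_add_right : ∀ x y z : C₀, brk x (y + z) = brk x y + brk x z
  brk_comm_left : ∀ x y z : C₀, brk (-x - y + x + y) z = 0
  brk_comm_right : ∀ x y z : C₀, brk x (-y - z + y + z) = 0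
  del_brk : ∀ x y : C₀, del (brk x y) = -y - x + y + x
  brk_del : ∀ a b : C₁, brk (del a) (del b) = -b - a + b + a
  brk_symm : ∀ x y : C₀, brk x y + brk y x = 0

/-- The right action of `C₀` on `C₁`: `c₁^{c₀} := c₁ + ⟨c₀, ∂c₁⟩`. -/
def sqmAct {C₀ C₁ : Type*} [AddGroup C₀] [AddGroup C₁] (S : SQM C₀ C₁)
    (c : C₁) (g : C₀) : C₁ :=
  c + S.brk g (S.del c)

open CategoryTheory Limits

/-- A Waldhausen category structure on a category `C` with a zero object and
binary coproducts: distinguished cofibrations and weak equivalences, all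
isomorphisms are cofibrations and weak equivalences, morphisms out of a zero
object are cofibrations, pushouts along cofibrations exist, cofibrations are
stable under pushout, and the gluing lemma holds. -/
structure Waldhausen (C : Type*) [Category C] [HasZeroObject C]
    [HasBinaryCoproducts C] where
  cof : MorphismProperty C
  weq : MorphismProperty C
  cof_id : ∀ X : C, cof (𝟙 X)
  weq_id : ∀ X : C, weq (𝟙 X)
  cof_comp : ∀ {X Y Z : C} (f : X ⟶ Y) (g : Y ⟶ Z), cof f → cof g → cof (f ≫ g)
  weq_comp : ∀ {X Y Z : C} (f : X ⟶ Y) (g : Y ⟶ Z), weq f → weq g → weq (f ≫ g)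
  cof_iso : ∀ {X Y : C} (f : X ⟶ Y), IsIso f → cof f
  weq_iso : ∀ {X Y : C} (f : X ⟶ Y), IsIso f → weq f
  cof_from_zero : ∀ {X Y : C} (f : X ⟶ Y), IsZero X → cof f
  pushout_exists : ∀ {A B X : C} (i : A ⟶ B), cof i → ∀ f : A ⟶ X, HasPushout i f
  cof_pushout : ∀ {A B X P : C} (i : A ⟶ B), cof i → ∀ (f : A ⟶ X)
    (inl : X ⟶ P) (inr : B ⟶ P), IsPushout f i inl inr → cof inl
  glue : ∀ {A B X P A' B' X' P' : C}
    (i : A ⟶ B), cof i → ∀ (f : A ⟶ X) (inl : X ⟶ P) (inr : B ⟶ P),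
    IsPushout f i inl inr → ∀ (i' : A' ⟶ B'), cof i' → ∀ (f' : A' ⟶ X')
    (inl' : X' ⟶ P') (inr' : B' ⟶ P'), IsPushout f' i' inl' inr' →
    ∀ (a : A ⟶ A') (b : B ⟶ B') (x : X ⟶ X') (t : P ⟶ P'),
    weq a → weq b → weq x →
    a ≫ i' = i ≫ b → a ≫ f' = f ≫ x →
    inl ≫ t = x ≫ inl' → inr ≫ t = b ≫ inr' → weq t

/-- The 2 out of 3 axiom for a class of weak equivalences. -/
def TwoOutOfThree {C : Type*} [Category C] (weq : MorphismProperty C) : Prop :=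
  ∀ {X Y Z : C} (f : X ⟶ Y) (g : Y ⟶ Z),
    (weq f → weq g → weq (f ≫ g)) ∧
    (weq (f ≫ g) → weq g → weq f) ∧
    (weq (f ≫ g) → weq f → weq g)

/-- A cylinder on an object `A`: a factorization of the folding map
`(1,1) : A ∨ A → A` as a cofibration followed by a weak equivalence. -/
structure Cylinder {C : Type*} [Category C] [HasZeroObject C]
    [HasBinaryCoproducts C] (W : Waldhausen C) (A : C) where
  I : C
  i₀ : A ⟶ I
  i₁ : A ⟶ I
  p : I ⟶ A
  hi₀ : i₀ ≫ p = 𝟙 A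
  hi₁ : i₁ ≫ p = 𝟙 A
  cof_i : W.cof (coprod.desc i₀ i₁)
  weq_p : W.weq p

/-- Generators and (the relevant) relations of the stable quadratic module
`D_*W` associated to a Waldhausen category `W`, interpreted in an arbitrary
stable quadratic module `S`. -/
structure DGens {C : Type*} [Category C] [HasZeroObject C]
    [HasBinaryCoproducts C] (W : Waldhausen C)
    {C₀ C₁ : Type*} [AddGroup C₀] [AddGroup C₁] (S : SQM C₀ C₁) where
  obj : C → C₀
  we : ∀ {A A' : C} (f : A ⟶ A'), W.weq f → C₁
  del_we : ∀ {A A' : C} (f : A ⟶ A') (hf : W.weq f),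
    S.del (we f hf) = -obj A' + obj A
  we_id : ∀ (A : C) (h : W.weq (𝟙 A)), we (𝟙 A) h = 0
  we_comp : ∀ {A B D : C} (f : A ⟶ B) (g : B ⟶ D)
    (hf : W.weq f) (hg : W.weq g) (hfg : W.weq (f ≫ g)),
    we (f ≫ g) hfg = we g hg + we f hf

/-! The inclusions `i₀, i₁` of a cylinder are sections of the same weak equivalence `p`, so
`[p] + [i₀] = [p] + [i₁]` and hence `[i₀] = [i₁]`. Reading the homotopy
relations through `[v ∘ u] = [v] + [u]` then gives
`[h] + [f] = [H] + [i₀] = [H] + [i₁] = [h] + [g]`, and `[h]` cancels. -/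

theorem TwoOutOfThree.of_comp_eq_id {C : Type*} [Category C] {weq : MorphismProperty C}
    (h23 : TwoOutOfThree weq) {X Y : C} (hid : weq (𝟙 X)) {i : X ⟶ Y} {p : Y ⟶ X}
    (e : i ≫ p = 𝟙 X) (hp : weq p) : weq i :=
  (h23 i p).2.1 (e ▸ hid) hp

namespace Cylinder

variable {C : Type*} [Category C] [HasZeroObject C] [HasBinaryCoproducts C] {W : Waldhausen C}
  {A : C}

theorem weq_i₀ (cyl : Cylinder W A) (h23 : TwoOutOfThree W.weq) : W.weq cyl.i₀ :=
  h23.of_comp_eq_id (W.weq_id A) cyl.hi₀ cyl.weq_p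

theorem weq_i₁ (cyl : Cylinder W A) (h23 : TwoOutOfThree W.weq) : W.weq cyl.i₁ :=
  h23.of_comp_eq_id (W.weq_id A) cyl.hi₁ cyl.weq_p

end Cylinder

namespace DGens

variable {C : Type*} [Category C] [HasZeroObject C] [HasBinaryCoproducts C] {W : Waldhausen C}
  {C₀ C₁ : Type*} [AddGroup C₀] [AddGroup C₁] {S : SQM C₀ C₁} (G : DGens W S)

theorem we_congr {X Y : C} {u v : X ⟶ Y} (e : u = v) (hu : W.weq u) (hv : W.weq v) :
    G.we u hu = G.we v hv := by
  subst e
  rfl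

theorem we_add_we_eq_of_comp_eq {X Y Y' Z : C} {u : X ⟶ Y} {v : Y ⟶ Z} {u' : X ⟶ Y'}
    {v' : Y' ⟶ Z} (hu : W.weq u) (hv : W.weq v) (hu' : W.weq u') (hv' : W.weq v')
    (e : u ≫ v = u' ≫ v') :
    G.we v hv + G.we u hu = G.we v' hv' + G.we u' hu' := by
  rw [← G.we_comp u v hu hv (W.weq_comp u v hu hv),
    ← G.we_comp u' v' hu' hv' (W.weq_comp u' v' hu' hv')]
  exact G.we_congr e _ _

theorem we_eq_of_comp_eq_comp {X Y Z : C} {u u' : X ⟶ Y} {v : Y ⟶ Z} (hu : W.weq u)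
    (hu' : W.weq u') (hv : W.weq v) (e : u ≫ v = u' ≫ v) :
    G.we u hu = G.we u' hu' :=
  add_left_cancel (G.we_add_we_eq_of_comp_eq hu hv hu' hv e)

end DGens

/-- In a Waldhausen category with cylinders satisfying the 2 out of 3 axiom,
homotopic weak equivalences `f ≃ g : A → A'` represent the same element
`[f] = [g]` in `D₁W`. -/
theorem homotopic_weq_same_class {C : Type*} [Category C] [HasZeroObject C]
    [HasBinaryCoproducts C] (W : Waldhausen C) (h23 : TwoOutOfThree W.weq)
    {C₀ C₁ : Type*} [AddGroup C₀] [AddGroup C₁] (S : SQM C₀ C₁)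
    (G : DGens W S) {A A' A'' : C} (f g : A ⟶ A')
    (hf : W.weq f) (hg : W.weq g)
    (cyl : Cylinder W A) (h : A' ⟶ A'') (hh : W.weq h)
    (H : cyl.I ⟶ A'')
    (e₀ : cyl.i₀ ≫ H = f ≫ h) (e₁ : cyl.i₁ ≫ H = g ≫ h) :
    G.we f hf = G.we g hg := by
  have hi₀ := cyl.weq_i₀ h23
  have hi₁ := cyl.weq_i₁ h23
  have hH : W.weq H := (h23 cyl.i₀ H).2.2 (e₀ ▸ W.weq_comp f h hf hh) hi₀
  have hi : G.we cyl.i₀ hi₀ = G.we cyl.i₁ hi₁ :=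
    G.we_eq_of_comp_eq_comp hi₀ hi₁ cyl.weq_p (cyl.hi₀.trans cyl.hi₁.symm)
  apply add_left_cancel (a := G.we h hh)
  calc G.we h hh + G.we f hf = G.we H hH + G.we cyl.i₀ hi₀ :=
        G.we_add_we_eq_of_comp_eq hf hh hi₀ hH e₀.symm
    _ = G.we H hH + G.we cyl.i₁ hi₁ := by rw [hi]
    _ = G.we h hh + G.we g hg := G.we_add_we_eq_of_comp_eq hi₁ hH hg hh e₁
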